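/- For every integer d ≥ 1, letting n = 2^d + d and letting f be the address function on n variables, under unit costs and the uniform distribution every non-adaptive strategy has expected cost at least 2^{d−1}; in particular OPT_N(f) ≥ 2^{d−1}. -/

import Mathlib

open Finset

/-- The set of tested indices `T` determines `f` on input `x`:
every input agreeing with `x` on `T` gives the same function value. -/
def Determines (n : ℕ) (f : (Fin n → Bool) → Bool) (T : Finset (Fin n))
    (x : Fin n → Bool) : Prop :=
  ∀ x' : Fin n → Bool, (∀ i ∈ T, x' i = x i) → f x' = f x

/-- The set of indices tested by the non-adaptive strategy `π` in its first `k` tests. -/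
def prefixSet (n : ℕ) (π : Equiv.Perm (Fin n)) (k : ℕ) : Finset (Fin n) :=
  Finset.univ.filter (fun i => (π.symm i).val < k)

/-- The number of tests performed by the non-adaptive strategy `π` on input `x`:
the least `k` such that the first `k` tested indices determine `f` on `x`. -/
noncomputable def naSteps (n : ℕ) (f : (Fin n → Bool) → Bool)
    (π : Equiv.Perm (Fin n)) (x : Fin n → Bool) : ℕ :=
  sInf {k : ℕ | Determines n f (prefixSet n π k) x}

/-- The cost incurred by the non-adaptive strategy `π` on input `x`, with cost vector `c`. -/
noncomputable def naCost (n : ℕ) (f : (Fin n → Bool) → Bool) (c : Fin n → ℝ)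
    (π : Equiv.Perm (Fin n)) (x : Fin n → Bool) : ℝ :=
  ∑ i ∈ prefixSet n π (naSteps n f π x), c i

/-- Probability of the outcome `x` under the product distribution with parameters `p`. -/
def prodWeight (n : ℕ) (p : Fin n → ℝ) (x : Fin n → Bool) : ℝ :=
  ∏ i : Fin n, if x i then p i else 1 - p i

/-- Expected cost of the non-adaptive strategy `π`. -/
noncomputable def naExpCost (n : ℕ) (f : (Fin n → Bool) → Bool) (c : Fin n → ℝ)
    (p : Fin n → ℝ) (π : Equiv.Perm (Fin n)) : ℝ :=
  ∑ x : Fin n → Bool, prodWeight n p x * naCost n f c π x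

/-- Optimal expected cost among non-adaptive strategies. -/
noncomputable def OPTN (n : ℕ) (f : (Fin n → Bool) → Bool) (c : Fin n → ℝ)
    (p : Fin n → ℝ) : ℝ :=
  sInf { r : ℝ | ∃ π : Equiv.Perm (Fin n), r = naExpCost n f c p π }

/-- Binary decision trees over `n` variables (adaptive strategies). -/
inductive DecTree (n : ℕ) : Type
  | leaf : Bool → DecTree n
  | node : Fin n → DecTree n → DecTree n → DecTree n

/-- Evaluation of a decision tree on an input. -/
def DecTree.eval {n : ℕ} : DecTree n → (Fin n → Bool) → Bool
  | .leaf b, _ => b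
  | .node i t0 t1, x => if x i then DecTree.eval t1 x else DecTree.eval t0 x

/-- Cost of a decision tree on input `x`: the sum of the costs of the indices
labeling the internal nodes on the root-to-leaf path followed on `x`. -/
def DecTree.costOn {n : ℕ} (c : Fin n → ℝ) : DecTree n → (Fin n → Bool) → ℝ
  | .leaf _, _ => 0
  | .node i t0 t1, x =>
      c i + (if x i then DecTree.costOn c t1 x else DecTree.costOn c t0 x)

/-- The decision tree `t` computes the function `f`. -/
def DecTree.Computes {n : ℕ} (t : DecTree n) (f : (Fin n → Bool) → Bool) : Prop :=
  ∀ x, t.eval x = f x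

/-- Expected cost of an adaptive strategy (decision tree). -/
noncomputable def adExpCost (n : ℕ) (c : Fin n → ℝ) (p : Fin n → ℝ)
    (t : DecTree n) : ℝ :=
  ∑ x : Fin n → Bool, prodWeight n p x * DecTree.costOn c t x

/-- Optimal expected cost among adaptive strategies computing `f`. -/
noncomputable def OPTA (n : ℕ) (f : (Fin n → Bool) → Bool) (c : Fin n → ℝ)
    (p : Fin n → ℝ) : ℝ :=
  sInf { r : ℝ | ∃ t : DecTree n, DecTree.Computes t f ∧ r = adExpCost n c p t }

/-- `f` is the monotone read-once DNF whose terms are the (nonempty, pairwise disjoint)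
sets of variables `T 0, …, T (m-1)`. -/
def IsReadOnceDNF (n m : ℕ) (T : Fin m → Finset (Fin n))
    (f : (Fin n → Bool) → Bool) : Prop :=
  (∀ j, (T j).Nonempty) ∧
  (∀ j k, j ≠ k → Disjoint (T j) (T k)) ∧
  (∀ x, f x = true ↔ ∃ j, ∀ i ∈ T j, x i = true)

/-- The value of variable `j` of `x : Fin (2^d + d) → Bool` (false for out-of-range `j`).
Variables `0, …, d-1` are the address bits and variables `d, …, d + 2^d - 1` are the
dedicated bits. -/
def xAt (d : ℕ) (x : Fin (2 ^ d + d) → Bool) (j : ℕ) : Bool :=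
  if h : j < 2 ^ d + d then x ⟨j, h⟩ else false

/-- The address encoded in binary by the `d` address bits of `x`. -/
def addrVal (d : ℕ) (x : Fin (2 ^ d + d) → Bool) : ℕ :=
  ∑ j ∈ Finset.range d, if xAt d x j then 2 ^ j else 0

/-- The address function on `n = 2^d + d` variables: it returns the dedicated bit
indexed by the address encoded by the `d` address bits. -/
def addressFn (d : ℕ) (x : Fin (2 ^ d + d) → Bool) : Bool :=
  xAt d x (d + addrVal d x)

/-! On every input the addressed dedicated bit must be tested: flipping it flips `f` and leaves
the address unchanged. The address of a uniformly random input is uniform over the `2^d`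
dedicated bits, which a permutation tests at `2^d` distinct positions, so the expected cost is
at least the mean of `1, …, 2^d`, namely `(2^d + 1)/2 ≥ 2^(d-1)`. -/

section NonAdaptive

variable {n : ℕ} (f : (Fin n → Bool) → Bool) (π : Equiv.Perm (Fin n)) (x : Fin n → Bool)

lemma determines_univ : Determines n f univ x :=
  fun _ h => congrArg f (funext fun i => h i (mem_univ i))

lemma card_prefixSet (k : ℕ) : #(prefixSet n π k) = min n k := by
  have : prefixSet n π k = (univ.filter fun j : Fin n => (j : ℕ) < k).map π.toEmbedding := by
    ext i; simp [prefixSet]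
  rw [this, card_map, Fin.card_filter_val_lt]

lemma determines_prefixSet_self : Determines n f (prefixSet n π n) x := by
  have : prefixSet n π n = univ := filter_true_of_mem fun i _ => (π.symm i).isLt
  exact this ▸ determines_univ f x

lemma determines_prefixSet_naSteps : Determines n f (prefixSet n π (naSteps n f π x)) x :=
  Nat.sInf_mem (s := {k | Determines n f (prefixSet n π k) x})
    ⟨n, determines_prefixSet_self f π x⟩

lemma naSteps_le : naSteps n f π x ≤ n :=
  Nat.sInf_le (determines_prefixSet_self f π x)

lemma naCost_one : naCost n f (fun _ => 1) π x = naSteps n f π x := by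
  simp [naCost, card_prefixSet, naSteps_le f π x]

lemma mem_of_determines_of_flip {T : Finset (Fin n)} {i : Fin n} (hT : Determines n f T x)
    (hi : f (Function.update x i (!x i)) ≠ f x) : i ∈ T := by
  by_contra hiT
  refine hi (hT _ fun j hj => ?_)
  rw [Function.update_of_ne (ne_of_mem_of_not_mem hj hiT)]

lemma lt_naSteps_of_flip {i : Fin n} (hi : f (Function.update x i (!x i)) ≠ f x) :
    (π.symm i : ℕ) < naSteps n f π x := by
  simpa [prefixSet] using mem_of_determines_of_flip f x (determines_prefixSet_naSteps f π x) hi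

lemma prodWeight_half : prodWeight n (fun _ => 1 / 2) x = (1 / 2) ^ n := by
  simp only [prodWeight]
  rw [prod_congr rfl fun i _ => show (if x i then (1 / 2 : ℝ) else 1 - 1 / 2) = 1 / 2 by
    split <;> norm_num, prod_const, card_univ, Fintype.card_fin]

lemma naExpCost_uniform_unit :
    naExpCost n f (fun _ => 1) (fun _ => 1 / 2) π = (∑ x, (naSteps n f π x : ℝ)) / 2 ^ n := by
  simp only [naExpCost, prodWeight_half, naCost_one, ← mul_sum]
  rw [one_div_pow, one_div_mul_eq_div]

end NonAdaptive

lemma Finset.sum_range_card_le_sum (s : Finset ℕ) : ∑ i ∈ range #s, i ≤ ∑ i ∈ s, i := by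
  refine s.induction_on_max (by simp) fun a s hlt ih => ?_
  have has : a ∉ s := fun h => lt_irrefl a (hlt a h)
  have hcard : #s ≤ a := by
    simpa using card_le_card (show s ⊆ range a from fun b hb => mem_range.2 (hlt b hb))
  rw [card_insert_of_notMem has, sum_range_succ, sum_insert has]
  omega

lemma Fintype.sum_range_card_le_sum_of_injective {α : Type*} [Fintype α] {F : α → ℕ}
    (hF : Function.Injective F) : ∑ i ∈ range (Fintype.card α), i ≤ ∑ a, F a := by
  classical
  simpa [card_image_of_injective _ hF, sum_image hF.injOn] using
    (univ.image F).sum_range_card_le_sum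

def binEquiv (d : ℕ) : (Fin d → Bool) ≃ Fin (2 ^ d) :=
  (Equiv.arrowCongr (Equiv.refl (Fin d)) finTwoEquiv.symm).trans finFunctionFinEquiv

lemma binEquiv_val (d : ℕ) (z : Fin d → Bool) :
    (binEquiv d z : ℕ) = ∑ i : Fin d, if z i then 2 ^ (i : ℕ) else 0 := by
  simp only [binEquiv, Equiv.trans_apply, finFunctionFinEquiv_apply, Equiv.arrowCongr_apply,
    Function.comp_apply]
  refine sum_congr rfl fun i _ => ?_
  cases h : z i <;> simp [h, finTwoEquiv]

def splitInput (d : ℕ) :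
    (Fin (2 ^ d + d) → Bool) ≃ (Fin d → Bool) × (Fin (2 ^ d) → Bool) :=
  (Equiv.arrowCongr (finCongr (Nat.add_comm _ _)) (Equiv.refl Bool)).trans
    (Fin.appendEquiv d (2 ^ d)).symm

def addr (d : ℕ) (x : Fin (2 ^ d + d) → Bool) : Fin (2 ^ d) :=
  binEquiv d (splitInput d x).1

lemma addr_val (d : ℕ) (x : Fin (2 ^ d + d) → Bool) : (addr d x : ℕ) = addrVal d x := by
  rw [addr, binEquiv_val, addrVal, ← Fin.sum_univ_eq_sum_range]
  refine sum_congr rfl fun i _ => ?_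
  have hi : (i : ℕ) < 2 ^ d + d := i.isLt.trans_le (Nat.le_add_left _ _)
  rw [xAt, dif_pos hi]
  rfl

lemma sum_comp_addr {M : Type*} [AddCommMonoid M] (d : ℕ) (g : Fin (2 ^ d) → M) :
    ∑ x, g (addr d x) = 2 ^ 2 ^ d • ∑ a, g a := by
  rw [← (splitInput d).symm.sum_comp]
  simp [addr, Fintype.sum_prod_type, ← smul_sum, (binEquiv d).sum_comp]

lemma addr_update_addNat (d : ℕ) (x : Fin (2 ^ d + d) → Bool) (a : Fin (2 ^ d)) (b : Bool) :
    addr d (Function.update x (a.addNat d) b) = addr d x := by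
  rw [addr, addr]
  congr 1
  funext j
  simp only [splitInput, Equiv.trans_apply, Fin.appendEquiv_symm_apply, Equiv.arrowCongr_apply]
  refine Function.update_of_ne (fun h => ?_) _ _
  have hval := congrArg Fin.val h
  simp only [finCongr_symm, finCongr_apply, Fin.val_cast, Fin.val_castAdd, Fin.val_addNat] at hval
  omega

lemma addressFn_eq (d : ℕ) (x : Fin (2 ^ d + d) → Bool) :
    addressFn d x = x ((addr d x).addNat d) := by
  rw [addressFn, xAt, ← addr_val, dif_pos (by omega)]
  congr 1
  ext
  simp [Nat.add_comm]

lemma addressFn_update_ne (d : ℕ) (x : Fin (2 ^ d + d) → Bool) :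
    addressFn d (Function.update x ((addr d x).addNat d) (!x ((addr d x).addNat d))) ≠
      addressFn d x := by
  rw [addressFn_eq, addr_update_addNat, addressFn_eq, Function.update_self]
  exact Bool.not_ne_self _

theorem le_naExpCost_addressFn (d : ℕ) (π : Equiv.Perm (Fin (2 ^ d + d))) :
    ((2 : ℝ) ^ d + 1) / 2 ≤
      naExpCost (2 ^ d + d) (addressFn d) (fun _ => 1) (fun _ => 1 / 2) π := by
  set pos : Fin (2 ^ d) → ℕ := fun a => π.symm (a.addNat d)
  have hpos : Function.Injective pos :=
    Fin.val_injective.comp (π.symm.injective.comp (Fin.addNatEmb d).injective)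
  have hsteps (x) : pos (addr d x) + 1 ≤ naSteps _ (addressFn d) π x :=
    lt_naSteps_of_flip _ π x (addressFn_update_ne d x)
  have hsum : 2 ^ 2 ^ d * (2 ^ d * (2 ^ d + 1)) ≤ 2 * ∑ x, naSteps _ (addressFn d) π x :=
    calc 2 ^ 2 ^ d * (2 ^ d * (2 ^ d + 1))
        = 2 ^ 2 ^ d * (2 * ∑ i ∈ range (2 ^ d + 1), i) := by
          rw [mul_comm 2, Finset.sum_range_id_mul_two, Nat.add_sub_cancel, mul_comm (2 ^ d)]
      _ ≤ 2 ^ 2 ^ d * (2 * ∑ a, (pos a + 1)) := by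
          have hdistinct := Fintype.sum_range_card_le_sum_of_injective hpos
          rw [Fintype.card_fin] at hdistinct
          rw [sum_range_succ, sum_add_distrib, sum_const, card_univ, Fintype.card_fin, smul_eq_mul,
            mul_one]
          gcongr
      _ = 2 * ∑ x, (pos (addr d x) + 1) := by
          rw [sum_comp_addr d (fun a => pos a + 1), smul_eq_mul]; ring
      _ ≤ 2 * ∑ x, naSteps _ (addressFn d) π x := by gcongr with x; exact hsteps x
  have hsum' : (2 : ℝ) ^ 2 ^ d * (2 ^ d * (2 ^ d + 1)) ≤
      2 * ∑ x, (naSteps _ (addressFn d) π x : ℝ) := by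
    exact_mod_cast hsum
  rw [naExpCost_uniform_unit, le_div_iff₀ (by positivity), pow_add]
  linarith

theorem stmt15_general (d : ℕ) :
    (∀ π : Equiv.Perm (Fin (2 ^ d + d)),
        (2 : ℝ) ^ (d - 1) ≤ naExpCost (2 ^ d + d) (addressFn d) (fun _ => 1) (fun _ => 1/2) π) ∧
      (2 : ℝ) ^ (d - 1) ≤ OPTN (2 ^ d + d) (addressFn d) (fun _ => 1) (fun _ => 1/2) := by
  have hpow : (2 : ℝ) ^ (d - 1) ≤ (2 ^ d + 1) / 2 := by
    rcases d with _ | d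
    · norm_num
    · rw [Nat.add_sub_cancel, pow_succ]; linarith
  have hbound (π : Equiv.Perm (Fin (2 ^ d + d))) :
      (2 : ℝ) ^ (d - 1) ≤ naExpCost (2 ^ d + d) (addressFn d) (fun _ => 1) (fun _ => 1/2) π :=
    hpow.trans (le_naExpCost_addressFn d π)
  refine ⟨hbound, le_csInf ⟨_, 1, rfl⟩ ?_⟩
  rintro r ⟨π, rfl⟩
  exact hbound π

/-- For every `d ≥ 1`, with `n = 2^d + d` and `f` the address function on `n` variables,
under unit costs and the uniform distribution every non-adaptive strategy has expected
cost at least `2^(d-1)`; in particular `OPT_N(f) ≥ 2^(d-1)`. -/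
theorem stmt15 (d : ℕ) (hd : 1 ≤ d) :
    (∀ π : Equiv.Perm (Fin (2 ^ d + d)),
        (2 : ℝ) ^ (d - 1) ≤ naExpCost (2 ^ d + d) (addressFn d) (fun _ => 1) (fun _ => 1/2) π) ∧
      (2 : ℝ) ^ (d - 1) ≤ OPTN (2 ^ d + d) (addressFn d) (fun _ => 1) (fun _ => 1/2) :=
  stmt15_general d
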